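/- Let μ > 0, r = (r₀, r₁) ∈ Δ_m × Δ_n, and let (x*, y*) be a saddle point of the regularized objective f_r on Δ_m × Δ_n. Then for every profile σ = (x, y) ∈ Δ_m × Δ_n, ⟨ℓ₀(σ), x* − x⟩ + ⟨ℓ₁(σ), y* − y⟩ ≤ −μ·( ‖x* − x‖₂² + ‖y* − y‖₂² ). -/
import Mathlib


open Finset

/-- Squared Euclidean norm of a vector in `ℝ^d`. -/
noncomputable def sqnorm {d : ℕ} (v : Fin d → ℝ) : ℝ := ∑ i, (v i) ^ 2

/-- Euclidean norm `‖·‖₂` of a vector in `ℝ^d`. -/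
noncomputable def enorm2 {d : ℕ} (v : Fin d → ℝ) : ℝ := Real.sqrt (sqnorm v)

/-- Euclidean inner product on `ℝ^d`. -/
noncomputable def ip {d : ℕ} (u v : Fin d → ℝ) : ℝ := ∑ i, u i * v i

/-- The max-player's payoff `⟨x, A y⟩` in the two-player zero-sum game with payoff matrix `A`. -/
noncomputable def pay {m n : ℕ} (A : Matrix (Fin m) (Fin n) ℝ)
    (x : Fin m → ℝ) (y : Fin n → ℝ) : ℝ := ip x (A.mulVec y)

/-- The regularized objective `f_r(x,y) = ⟨x, A y⟩ + (μ/2)‖x − r₀‖₂² − (μ/2)‖y − r₁‖₂²`. -/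
noncomputable def freg {m n : ℕ} (A : Matrix (Fin m) (Fin n) ℝ) (μ : ℝ)
    (r₀ : Fin m → ℝ) (r₁ : Fin n → ℝ) (x : Fin m → ℝ) (y : Fin n → ℝ) : ℝ :=
  pay A x y + (μ / 2) * sqnorm (x - r₀) - (μ / 2) * sqnorm (y - r₁)

/-- `(xs, ys)` is a saddle point of `f_r` on `Δ_m × Δ_n`. -/
def IsSaddle {m n : ℕ} (A : Matrix (Fin m) (Fin n) ℝ) (μ : ℝ)
    (r₀ : Fin m → ℝ) (r₁ : Fin n → ℝ) (xs : Fin m → ℝ) (ys : Fin n → ℝ) : Prop :=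
  xs ∈ stdSimplex ℝ (Fin m) ∧ ys ∈ stdSimplex ℝ (Fin n) ∧
  ∀ x ∈ stdSimplex ℝ (Fin m), ∀ y ∈ stdSimplex ℝ (Fin n),
    freg A μ r₀ r₁ xs y ≤ freg A μ r₀ r₁ xs ys ∧
    freg A μ r₀ r₁ xs ys ≤ freg A μ r₀ r₁ x ys

/-- Regularized loss gradient of the min-player at profile `σ = (x, y)`:
`ℓ₀(σ) = A y + μ(x − r₀)`. -/
noncomputable def ell0 {m n : ℕ} (A : Matrix (Fin m) (Fin n) ℝ) (μ : ℝ)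
    (r₀ : Fin m → ℝ) (σ : (Fin m → ℝ) × (Fin n → ℝ)) : Fin m → ℝ :=
  A.mulVec σ.2 + μ • (σ.1 - r₀)

/-- Regularized loss gradient of the max-player at profile `σ = (x, y)`:
`ℓ₁(σ) = −Aᵀ x + μ(y − r₁)`. -/
noncomputable def ell1 {m n : ℕ} (A : Matrix (Fin m) (Fin n) ℝ) (μ : ℝ)
    (r₁ : Fin n → ℝ) (σ : (Fin m → ℝ) × (Fin n → ℝ)) : Fin n → ℝ :=
  -(A.transpose.mulVec σ.1) + μ • (σ.2 - r₁)

/-- `m₀(σ) = ⟨ℓ₀(σ), x⟩·𝟙 − ℓ₀(σ)`. -/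
noncomputable def mvec0 {m n : ℕ} (A : Matrix (Fin m) (Fin n) ℝ) (μ : ℝ)
    (r₀ : Fin m → ℝ) (σ : (Fin m → ℝ) × (Fin n → ℝ)) : Fin m → ℝ :=
  (ip (ell0 A μ r₀ σ) σ.1) • (1 : Fin m → ℝ) - ell0 A μ r₀ σ

/-- `m₁(σ) = ⟨ℓ₁(σ), y⟩·𝟙 − ℓ₁(σ)`. -/
noncomputable def mvec1 {m n : ℕ} (A : Matrix (Fin m) (Fin n) ℝ) (μ : ℝ)
    (r₁ : Fin n → ℝ) (σ : (Fin m → ℝ) × (Fin n → ℝ)) : Fin n → ℝ :=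
  (ip (ell1 A μ r₁ σ) σ.2) • (1 : Fin n → ℝ) - ell1 A μ r₁ σ

/-- The strategy profile obtained by `ℓ₁`-normalizing each block of
the regret vector `θ`: `σ_i = θ_i / ‖θ_i‖₁`. -/
noncomputable def strat {m n : ℕ} (θ : (Fin m → ℝ) × (Fin n → ℝ)) :
    (Fin m → ℝ) × (Fin n → ℝ) :=
  ((∑ i, |θ.1 i|)⁻¹ • θ.1, (∑ j, |θ.2 j|)⁻¹ • θ.2)

section AuxLemmas

lemma aux_ipd {d : ℕ} (u v : Fin d → ℝ) : ip u v = dotProduct u v := rfl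

lemma aux_sqnorm_eq {d : ℕ} (v : Fin d → ℝ) : sqnorm v = dotProduct v v := by
  simp [sqnorm, dotProduct, sq]

lemma aux_sqnorm_nonneg {d : ℕ} (v : Fin d → ℝ) : 0 ≤ sqnorm v :=
  Finset.sum_nonneg fun i _ => sq_nonneg _

lemma aux_ip_negr {d : ℕ} (u v w : Fin d → ℝ) : ip u (v - w) = -ip u (w - v) := by
  simp only [ip, ← Finset.sum_neg_distrib]
  exact Finset.sum_congr rfl fun i _ => by simp [Pi.sub_apply]; ring

lemma aux_key {m n : ℕ} (A : Matrix (Fin m) (Fin n) ℝ) (μ : ℝ)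
    (r₀ : Fin m → ℝ) (r₁ : Fin n → ℝ) (xs x : Fin m → ℝ) (ys y : Fin n → ℝ) :
    ip (ell0 A μ r₀ (x, y)) (xs - x) + ip (ell1 A μ r₁ (x, y)) (ys - y)
      = ip (ell0 A μ r₀ (xs, ys)) (xs - x) + ip (ell1 A μ r₁ (xs, ys)) (ys - y)
        - μ * (sqnorm (xs - x) + sqnorm (ys - y)) := by
  simp only [ell0, ell1, aux_ipd, aux_sqnorm_eq, Matrix.mulVec_transpose,
    Matrix.dotProduct_mulVec, Matrix.sub_vecMul, Matrix.add_vecMul,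
    add_dotProduct, sub_dotProduct, smul_dotProduct,
    neg_dotProduct, dotProduct_add, dotProduct_sub,
    dotProduct_smul, dotProduct_neg, smul_eq_mul]
  simp only [dotProduct_comm]
  simp only [Matrix.dotProduct_mulVec]
  simp only [dotProduct_comm]
  ring

lemma aux_limit (a b : ℝ) (hb : 0 ≤ b)
    (h : ∀ t : ℝ, 0 < t → t ≤ 1 → 0 ≤ t * a + t ^ 2 * b) : 0 ≤ a := by
  by_contra hc
  push_neg at hc
  set t : ℝ := min 1 (-a / (2 * (b + 1))) with ht
  have ht0 : 0 < t := lt_min one_pos (div_pos (by linarith) (by linarith))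
  have ht1 : t ≤ 1 := min_le_left _ _
  have h2 : t * (2 * (b + 1)) ≤ -a := by
    rw [← le_div_iff₀ (by linarith)]
    exact min_le_right _ _
  have h3 := h t ht0 ht1
  nlinarith [mul_pos ht0 ht0, mul_le_mul_of_nonneg_left h2 ht0.le,
    mul_lt_mul_of_pos_left hc ht0]

lemma aux_ip_smul_add {d : ℕ} (u v : Fin d → ℝ) (t c : ℝ) :
    c * sqnorm (u + t • v) = c * sqnorm u + t * (2 * c * ip u v) + t ^ 2 * (c * sqnorm v) := by
  simp only [sqnorm, ip, Pi.add_apply, Pi.smul_apply, smul_eq_mul, Finset.mul_sum,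
    ← Finset.sum_add_distrib]
  exact Finset.sum_congr rfl fun i _ => by ring

lemma aux_ip_linear_left {d : ℕ} (u v w : Fin d → ℝ) (t : ℝ) :
    ip (u + t • v) w = ip u w + t * ip v w := by
  simp only [ip, Pi.add_apply, Pi.smul_apply, smul_eq_mul, Finset.mul_sum,
    ← Finset.sum_add_distrib]
  exact Finset.sum_congr rfl fun i _ => by ring

lemma aux_ip_linear_right {d : ℕ} (u v w : Fin d → ℝ) (t : ℝ) :
    ip u (v + t • w) = ip u v + t * ip u w := by
  simp only [ip, Pi.add_apply, Pi.smul_apply, smul_eq_mul, Finset.mul_sum,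
    ← Finset.sum_add_distrib]
  exact Finset.sum_congr rfl fun i _ => by ring

lemma aux_expand0 {m n : ℕ} (A : Matrix (Fin m) (Fin n) ℝ) (μ : ℝ)
    (r₀ : Fin m → ℝ) (r₁ : Fin n → ℝ) (xs x : Fin m → ℝ) (ys : Fin n → ℝ) (t : ℝ) :
    freg A μ r₀ r₁ (xs + t • (x - xs)) ys
      = freg A μ r₀ r₁ xs ys + t * ip (ell0 A μ r₀ (xs, ys)) (x - xs)
        + t ^ 2 * (μ / 2) * sqnorm (x - xs) := by
  have h1 : xs + t • (x - xs) - r₀ = (xs - r₀) + t • (x - xs) := by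
    funext i; simp [Pi.add_apply, Pi.sub_apply]; ring
  have h2 : ip (ell0 A μ r₀ (xs, ys)) (x - xs)
      = ip (x - xs) (A.mulVec ys) + μ * ip (xs - r₀) (x - xs) := by
    simp only [ell0, aux_ipd, add_dotProduct, smul_dotProduct, smul_eq_mul]
    congr 1
    exact dotProduct_comm _ _
  unfold freg pay
  rw [h1, aux_ip_linear_left, aux_ip_smul_add (xs - r₀) (x - xs) t (μ / 2), h2]
  ring

lemma aux_expand1 {m n : ℕ} (A : Matrix (Fin m) (Fin n) ℝ) (μ : ℝ)
    (r₀ : Fin m → ℝ) (r₁ : Fin n → ℝ) (xs : Fin m → ℝ) (ys y : Fin n → ℝ) (t : ℝ) :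
    freg A μ r₀ r₁ xs (ys + t • (y - ys))
      = freg A μ r₀ r₁ xs ys - t * ip (ell1 A μ r₁ (xs, ys)) (y - ys)
        - t ^ 2 * (μ / 2) * sqnorm (y - ys) := by
  have h1 : ys + t • (y - ys) - r₁ = (ys - r₁) + t • (y - ys) := by
    funext i; simp [Pi.add_apply, Pi.sub_apply]; ring
  have h0 : A.mulVec (ys + t • (y - ys)) = A.mulVec ys + t • A.mulVec (y - ys) := by
    rw [Matrix.mulVec_add, Matrix.mulVec_smul]
  have h2 : ip (ell1 A μ r₁ (xs, ys)) (y - ys)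
      = -ip xs (A.mulVec (y - ys)) + μ * ip (ys - r₁) (y - ys) := by
    simp only [ell1, aux_ipd, add_dotProduct, smul_dotProduct,
      neg_dotProduct, smul_eq_mul, Matrix.mulVec_transpose]
    congr 2
    rw [Matrix.dotProduct_mulVec, dotProduct_comm]
  unfold freg pay
  rw [h1, h0, aux_ip_linear_right xs (A.mulVec ys) (A.mulVec (y - ys)) t,
    aux_ip_smul_add (ys - r₁) (y - ys) t (μ / 2), h2]
  ring

end AuxLemmas

/-- if `(x*, y*)` is a saddle point of the regularized objective `f_r`, then for
every profile `σ = (x, y) ∈ Δ_m × Δ_n`,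
`⟨ℓ₀(σ), x* − x⟩ + ⟨ℓ₁(σ), y* − y⟩ ≤ −μ(‖x* − x‖₂² + ‖y* − y‖₂²)`. -/
theorem regularized_gradient_strong_monotonicity_at_saddle
    (m n : ℕ) (hm : 1 ≤ m) (hn : 1 ≤ n) (A : Matrix (Fin m) (Fin n) ℝ)
    (μ : ℝ) (hμ : 0 < μ)
    (r₀ : Fin m → ℝ) (r₁ : Fin n → ℝ)
    (hr₀ : r₀ ∈ stdSimplex ℝ (Fin m)) (hr₁ : r₁ ∈ stdSimplex ℝ (Fin n))
    (xs : Fin m → ℝ) (ys : Fin n → ℝ) (hsaddle : IsSaddle A μ r₀ r₁ xs ys) :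
    ∀ x ∈ stdSimplex ℝ (Fin m), ∀ y ∈ stdSimplex ℝ (Fin n),
      ip (ell0 A μ r₀ (x, y)) (xs - x) + ip (ell1 A μ r₁ (x, y)) (ys - y) ≤
        -μ * (sqnorm (xs - x) + sqnorm (ys - y)) := by
  obtain ⟨hxs, hys, hS⟩ := hsaddle
  intro x hx y hy
  have fo0 : 0 ≤ ip (ell0 A μ r₀ (xs, ys)) (x - xs) := by
    apply aux_limit _ ((μ / 2) * sqnorm (x - xs))
      (mul_nonneg (by linarith) (aux_sqnorm_nonneg _))
    intro t ht0 ht1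
    have hmem : xs + t • (x - xs) ∈ stdSimplex ℝ (Fin m) := by
      have h := (convex_stdSimplex ℝ (Fin m)) hxs hx (by linarith : (0:ℝ) ≤ 1 - t) ht0.le
        (by ring)
      convert h using 1
      funext i; simp [Pi.add_apply]; ring
    have h := (hS _ hmem _ hys).2
    rw [aux_expand0] at h
    nlinarith [h]
  have fo1 : 0 ≤ ip (ell1 A μ r₁ (xs, ys)) (y - ys) := by
    apply aux_limit _ ((μ / 2) * sqnorm (y - ys))
      (mul_nonneg (by linarith) (aux_sqnorm_nonneg _))
    intro t ht0 ht1
    have hmem : ys + t • (y - ys) ∈ stdSimplex ℝ (Fin n) := by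
      have h := (convex_stdSimplex ℝ (Fin n)) hys hy (by linarith : (0:ℝ) ≤ 1 - t) ht0.le
        (by ring)
      convert h using 1
      funext j; simp [Pi.add_apply]; ring
    have h := (hS _ hxs _ hmem).1
    rw [aux_expand1] at h
    nlinarith [h]
  rw [aux_key]
  rw [aux_ip_negr (ell0 A μ r₀ (xs, ys)) xs x, aux_ip_negr (ell1 A μ r₁ (xs, ys)) ys y]
  linarith
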